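/- Fix real constants β > 0 and L > 0. Let x : ℝ → ℝ³ be a smooth curve with ‖x'(s)‖ = 1 for all s in a neighborhood of [0,L], and suppose its curvature κ(s) := ‖x''(s)‖ is strictly positive for all s ∈ [0,L]. Define the unit normal N(s) := x''(s)/κ(s), the unit binormal B(s) := x'(s) × N(s), the torsion τ(s) := N'(s) · B(s), and w(s) := κ(s)/√(κ(s)² + β²). Then for every smooth function δ : ℝ → ℝ with compact support contained in (0,L), the function h ↦ E(x + h·δ·B) is differentiable at h = 0, and its derivative there equals ∫₀ᴸ δ(s) ( 2 τ(s) w'(s) + τ'(s) w(s) ) ds. (In particular, a stationary curve of E under binormal perturbations satisfies 2τ (d/ds)(κ/√(κ²+β²)) + (κ/√(κ²+β²)) (d/ds)τ = 0.) -/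

import Mathlib

/-- The cross product on `ℝ³ = EuclideanSpace ℝ (Fin 3)`. -/
noncomputable def cross3 (a b : EuclideanSpace ℝ (Fin 3)) : EuclideanSpace ℝ (Fin 3) :=
  (WithLp.equiv 2 (Fin 3 → ℝ)).symm
    ![a 1 * b 2 - a 2 * b 1, a 2 * b 0 - a 0 * b 2, a 0 * b 1 - a 1 * b 0]

/-- The elastica energy `E(y) = ∫₀ᴸ √(‖y'×y''‖²/‖y'‖⁴ + β²‖y'‖²) dt`, the
parametrization-invariant form of `∫ √(κ² + β²) ds`. -/
noncomputable def elasticaEnergy (β L : ℝ) (y : ℝ → EuclideanSpace ℝ (Fin 3)) : ℝ :=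
  ∫ t in (0:ℝ)..L,
    Real.sqrt (‖cross3 (deriv y t) (deriv (deriv y) t)‖ ^ 2 / ‖deriv y t‖ ^ 4
      + β ^ 2 * ‖deriv y t‖ ^ 2)


noncomputable section
open Real MeasureTheory Set Metric

local notation "E3" => EuclideanSpace ℝ (Fin 3)

lemma cross3_apply (a b : E3) :
    (cross3 a b 0 = a 1 * b 2 - a 2 * b 1) ∧ (cross3 a b 1 = a 2 * b 0 - a 0 * b 2)
      ∧ (cross3 a b 2 = a 0 * b 1 - a 1 * b 0) := by
  refine ⟨rfl, rfl, rfl⟩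

lemma inner_cross3_left (a b : E3) : (inner ℝ a (cross3 a b) : ℝ) = 0 := by
  simp [cross3, PiLp.inner_apply, Fin.sum_univ_three]
  ring

lemma inner_cross3_right (a b : E3) : (inner ℝ b (cross3 a b) : ℝ) = 0 := by
  simp [cross3, PiLp.inner_apply, Fin.sum_univ_three]
  ring

lemma inner_cross3_cross3 (a b c d : E3) :
    (inner ℝ (cross3 a b) (cross3 c d) : ℝ)
      = (inner ℝ a c : ℝ) * (inner ℝ b d : ℝ) - (inner ℝ a d : ℝ) * (inner ℝ b c : ℝ) := by
  simp [cross3, PiLp.inner_apply, Fin.sum_univ_three]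
  ring

lemma cross3_add_left (a a' b : E3) : cross3 (a + a') b = cross3 a b + cross3 a' b := by
  apply PiLp.ext; intro i
  fin_cases i <;>
    simp [cross3, WithLp.equiv_symm_apply, PiLp.toLp_apply, PiLp.add_apply] <;> ring

lemma cross3_smul_left (c : ℝ) (a b : E3) : cross3 (c • a) b = c • cross3 a b := by
  apply PiLp.ext; intro i
  fin_cases i <;>
    simp [cross3, WithLp.equiv_symm_apply, PiLp.toLp_apply, PiLp.smul_apply, smul_eq_mul] <;> ring

lemma cross3_add_right (a b b' : E3) : cross3 a (b + b') = cross3 a b + cross3 a b' := by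
  apply PiLp.ext; intro i
  fin_cases i <;>
    simp [cross3, WithLp.equiv_symm_apply, PiLp.toLp_apply, PiLp.add_apply] <;> ring

lemma cross3_smul_right (c : ℝ) (a b : E3) : cross3 a (c • b) = c • cross3 a b := by
  apply PiLp.ext; intro i
  fin_cases i <;>
    simp [cross3, WithLp.equiv_symm_apply, PiLp.toLp_apply, PiLp.smul_apply, smul_eq_mul] <;> ring

noncomputable def crossLM : E3 →ₗ[ℝ] E3 →ₗ[ℝ] E3 :=
  LinearMap.mk₂ ℝ cross3 cross3_add_left cross3_smul_left cross3_add_right cross3_smul_right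

noncomputable def crossL : E3 →L[ℝ] E3 →L[ℝ] E3 :=
  LinearMap.toContinuousLinearMap
    { toFun := fun a => LinearMap.toContinuousLinearMap (crossLM a)
      map_add' := by
        intro a a'; ext b
        simp [crossLM, cross3_add_left]
      map_smul' := by
        intro c a; ext b
        simp [crossLM, cross3_smul_left] }

@[simp] lemma crossL_apply (a b : E3) : crossL a b = cross3 a b := rfl

lemma HasDerivAt.cross3 {f g : ℝ → E3} {f' g' : E3} {s : ℝ}
    (hf : HasDerivAt f f' s) (hg : HasDerivAt g g' s) :
    HasDerivAt (fun t => cross3 (f t) (g t)) (cross3 f' (g s) + cross3 (f s) g') s := by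
  have h1 : HasDerivAt (fun t => crossL (f t)) (crossL f') s :=
    crossL.hasFDerivAt.comp_hasDerivAt s hf
  simpa using h1.clm_apply hg

lemma ContDiffAt.cross3' {F : Type*} [NormedAddCommGroup F] [NormedSpace ℝ F]
    {f g : F → E3} {n : ℕ∞} {p : F}
    (hf : ContDiffAt ℝ n f p) (hg : ContDiffAt ℝ n g p) :
    ContDiffAt ℝ n (fun t => cross3 (f t) (g t)) p := by
  have : ContDiff ℝ n (fun q : E3 × E3 => crossL q.1 q.2) :=
    crossL.isBoundedBilinearMap.contDiff
  simpa [Function.comp_def] using this.comp_contDiffAt p (hf.prodMk hg)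

lemma Continuous.cross3' {F : Type*} [TopologicalSpace F]
    {f g : F → E3} (hf : Continuous f) (hg : Continuous g) :
    Continuous (fun t => cross3 (f t) (g t)) := by
  have : Continuous (fun q : E3 × E3 => crossL q.1 q.2) :=
    crossL.isBoundedBilinearMap.continuous
  simpa [Function.comp_def] using this.comp (hf.prodMk hg)

lemma cross3_self (a : E3) : cross3 a a = 0 := by
  apply PiLp.ext; intro i
  fin_cases i <;> simp [cross3, WithLp.equiv_symm_apply, PiLp.toLp_apply] <;> ring

lemma psi_hasDerivAt_zero (β : ℝ) (hβ : 0 < β) (T G A G2 : E3) (hT : ‖T‖ = 1)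
    (hTA : (inner ℝ T A : ℝ) = 0) (hTG : (inner ℝ T G : ℝ) = 0) :
    HasDerivAt
      (fun h : ℝ => Real.sqrt (‖cross3 (T + h • G) (A + h • G2)‖ ^ 2 / ‖T + h • G‖ ^ 4
        + β ^ 2 * ‖T + h • G‖ ^ 2))
      ((inner ℝ A G2 : ℝ) / Real.sqrt (‖A‖ ^ 2 + β ^ 2)) 0 := by
  have hAT : (inner ℝ A T : ℝ) = 0 := by rw [real_inner_comm]; exact hTA
  have hGT : (inner ℝ G T : ℝ) = 0 := by rw [real_inner_comm]; exact hTG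
  have hTT : (inner ℝ T T : ℝ) = 1 := by
    rw [real_inner_self_eq_norm_sq, hT]; norm_num
  have hv : HasDerivAt (fun h : ℝ => T + h • G) G 0 := by
    simpa using ((hasDerivAt_id (0:ℝ)).smul_const G).const_add T
  have ha : HasDerivAt (fun h : ℝ => A + h • G2) G2 0 := by
    simpa using ((hasDerivAt_id (0:ℝ)).smul_const G2).const_add A
  have hv0 : T + (0:ℝ) • G = T := by rw [zero_smul, add_zero]
  have ha0 : A + (0:ℝ) • G2 = A := by rw [zero_smul, add_zero]
  set D : E3 := cross3 G A + cross3 T G2 with hD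
  have hc : HasDerivAt (fun h : ℝ => cross3 (T + h • G) (A + h • G2)) D 0 := by
    have h1 := hv.cross3 ha
    rw [hv0, ha0] at h1
    exact h1
  have hDval : (inner ℝ (cross3 T A) D : ℝ) = (inner ℝ A G2 : ℝ) := by
    have e1 : (inner ℝ (cross3 T A) (cross3 G A) : ℝ)
        = (inner ℝ T G : ℝ) * (inner ℝ A A : ℝ) - (inner ℝ T A : ℝ) * (inner ℝ A G : ℝ) :=
      inner_cross3_cross3 T A G A
    have e2 : (inner ℝ (cross3 T A) (cross3 T G2) : ℝ)
        = (inner ℝ T T : ℝ) * (inner ℝ A G2 : ℝ) - (inner ℝ T G2 : ℝ) * (inner ℝ A T : ℝ) :=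
      inner_cross3_cross3 T A T G2
    rw [hD, inner_add_right, e1, e2, hTA, hTG, hTT, hAT]
    ring
  have hC : HasDerivAt (fun h : ℝ => ‖cross3 (T + h • G) (A + h • G2)‖ ^ 2)
      (2 * (inner ℝ A G2 : ℝ)) 0 := by
    have h1 := hc.inner ℝ hc
    rw [hv0, ha0] at h1
    have h2 : (fun h : ℝ => (inner ℝ (cross3 (T + h • G) (A + h • G2))
        (cross3 (T + h • G) (A + h • G2)) : ℝ))
        = fun h : ℝ => ‖cross3 (T + h • G) (A + h • G2)‖ ^ 2 := by
      funext h; exact real_inner_self_eq_norm_sq _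
    rw [h2] at h1
    have h3 : (inner ℝ (cross3 T A) D : ℝ) + (inner ℝ D (cross3 T A) : ℝ)
        = 2 * (inner ℝ A G2 : ℝ) := by
      rw [real_inner_comm (cross3 T A) D, hDval]; ring
    rw [h3] at h1
    exact h1
  have hQ : HasDerivAt (fun h : ℝ => ‖T + h • G‖ ^ 2) 0 0 := by
    have h1 := hv.inner ℝ hv
    rw [hv0] at h1
    have h2 : (fun h : ℝ => (inner ℝ (T + h • G) (T + h • G) : ℝ))
        = fun h : ℝ => ‖T + h • G‖ ^ 2 := by
      funext h; exact real_inner_self_eq_norm_sq _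
    rw [h2] at h1
    have h3 : (inner ℝ T G : ℝ) + (inner ℝ G T : ℝ) = 0 := by rw [hTG, hGT]; ring
    rw [h3] at h1
    exact h1
  have hQ4 : HasDerivAt (fun h : ℝ => ‖T + h • G‖ ^ 4) 0 0 := by
    have h1 := hQ.fun_pow 2
    have h2 : (fun h : ℝ => (‖T + h • G‖ ^ 2) ^ 2) = fun h : ℝ => ‖T + h • G‖ ^ 4 := by
      funext h; ring
    rw [h2] at h1
    have h3 : (2:ℕ) * (‖T + (0:ℝ) • G‖ ^ 2) ^ (2 - 1) * 0 = 0 := by ring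
    rw [h3] at h1
    exact h1
  have hQ20 : ‖T + (0:ℝ) • G‖ ^ 2 = 1 := by rw [hv0, hT]; norm_num
  have hQ40 : ‖T + (0:ℝ) • G‖ ^ 4 = 1 := by rw [hv0, hT]; norm_num
  have hcross : ‖cross3 T A‖ ^ 2 = ‖A‖ ^ 2 := by
    have := inner_cross3_cross3 T A T A
    rw [hTA] at this
    rw [← real_inner_self_eq_norm_sq, this, hTT, real_inner_self_eq_norm_sq]
    ring
  have hdiv : HasDerivAt
      (fun h : ℝ => ‖cross3 (T + h • G) (A + h • G2)‖ ^ 2 / ‖T + h • G‖ ^ 4)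
      (2 * (inner ℝ A G2 : ℝ)) 0 := by
    have h1 := hC.div hQ4 (by rw [hQ40]; exact one_ne_zero)
    have h3 : (2 * (inner ℝ A G2 : ℝ) * ‖T + (0:ℝ) • G‖ ^ 4
        - ‖cross3 (T + (0:ℝ) • G) (A + (0:ℝ) • G2)‖ ^ 2 * 0) / (‖T + (0:ℝ) • G‖ ^ 4) ^ 2
        = 2 * (inner ℝ A G2 : ℝ) := by
      rw [hQ40]; ring
    rw [h3] at h1
    exact h1
  have hβt : HasDerivAt (fun h : ℝ => β ^ 2 * ‖T + h • G‖ ^ 2) 0 0 := by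
    have h1 := hQ.const_mul (β ^ 2)
    have h3 : β ^ 2 * 0 = 0 := by ring
    rw [h3] at h1
    exact h1
  have hG : HasDerivAt
      (fun h : ℝ => ‖cross3 (T + h • G) (A + h • G2)‖ ^ 2 / ‖T + h • G‖ ^ 4
        + β ^ 2 * ‖T + h • G‖ ^ 2)
      (2 * (inner ℝ A G2 : ℝ)) 0 := by
    have h1 := hdiv.add hβt
    rw [add_zero] at h1
    exact h1
  have hG0 : ‖cross3 (T + (0:ℝ) • G) (A + (0:ℝ) • G2)‖ ^ 2 / ‖T + (0:ℝ) • G‖ ^ 4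
      + β ^ 2 * ‖T + (0:ℝ) • G‖ ^ 2 = ‖A‖ ^ 2 + β ^ 2 := by
    rw [hv0, ha0, hT, hcross]; norm_num
  have hG0pos : (0:ℝ) < ‖A‖ ^ 2 + β ^ 2 := by positivity
  have hs := hG.sqrt (by rw [hG0]; exact hG0pos.ne')
  rw [hG0] at hs
  have hfin : 2 * (inner ℝ A G2 : ℝ) / (2 * Real.sqrt (‖A‖ ^ 2 + β ^ 2))
      = (inner ℝ A G2 : ℝ) / Real.sqrt (‖A‖ ^ 2 + β ^ 2) := by
    rw [mul_div_mul_left _ _ (by norm_num : (2:ℝ) ≠ 0)]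
  rw [hfin] at hs
  exact hs

open scoped ContDiff

noncomputable def vA (f g : ℝ → E3) : ℝ × ℝ → E3 := fun p => f p.2 + p.1 • g p.2

noncomputable def psiA (β : ℝ) (f g f₂ g₂ : ℝ → E3) (p : ℝ × ℝ) : ℝ :=
  Real.sqrt (‖cross3 (vA f g p) (vA f₂ g₂ p)‖ ^ 2 / ‖vA f g p‖ ^ 4
    + β ^ 2 * ‖vA f g p‖ ^ 2)

lemma vA_contDiff {f g : ℝ → E3} (hf : ContDiff ℝ ∞ f) (hg : ContDiff ℝ ∞ g) :
    ContDiff ℝ ∞ (vA f g) :=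
  (hf.comp contDiff_snd).add (contDiff_fst.smul (hg.comp contDiff_snd))

lemma psiA_arg_pos (β : ℝ) (hβ : 0 < β) (f g f₂ g₂ : ℝ → E3) (p : ℝ × ℝ)
    (hp : vA f g p ≠ 0) :
    0 < ‖cross3 (vA f g p) (vA f₂ g₂ p)‖ ^ 2 / ‖vA f g p‖ ^ 4
      + β ^ 2 * ‖vA f g p‖ ^ 2 :=
  add_pos_of_nonneg_of_pos (div_nonneg (by positivity) (by positivity))
    (mul_pos (pow_pos hβ 2) (pow_pos (norm_pos_iff.mpr hp) 2))

lemma psiA_contDiffAt (β : ℝ) (hβ : 0 < β) {f g f₂ g₂ : ℝ → E3}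
    (hf : ContDiff ℝ ∞ f) (hg : ContDiff ℝ ∞ g)
    (hf₂ : ContDiff ℝ ∞ f₂) (hg₂ : ContDiff ℝ ∞ g₂)
    {p : ℝ × ℝ} (hp : vA f g p ≠ 0) :
    ContDiffAt ℝ ∞ (psiA β f g f₂ g₂) p := by
  have h1 : ContDiffAt ℝ ∞ (vA f g) p := (vA_contDiff hf hg).contDiffAt
  have h2 : ContDiffAt ℝ ∞ (vA f₂ g₂) p := (vA_contDiff hf₂ hg₂).contDiffAt
  have hnum : ContDiffAt ℝ ∞ (fun q => ‖cross3 (vA f g q) (vA f₂ g₂ q)‖ ^ 2) p :=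
    (h1.cross3' h2).norm_sq ℝ
  have hden : ContDiffAt ℝ ∞ (fun q => ‖vA f g q‖ ^ 4) p := (h1.norm ℝ hp).pow 4
  have hrest : ContDiffAt ℝ ∞ (fun q => β ^ 2 * ‖vA f g q‖ ^ 2) p :=
    contDiffAt_const.mul (h1.norm_sq ℝ)
  have hdenne : ‖vA f g p‖ ^ 4 ≠ 0 := pow_ne_zero 4 (norm_ne_zero_iff.mpr hp)
  exact ((hnum.div hden hdenne).add hrest).sqrt (psiA_arg_pos β hβ f g f₂ g₂ p hp).ne'

set_option maxHeartbeats 2000000 in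
/-- first variation of the elastica energy under binormal perturbations:
for a smooth unit-speed curve `x` with positive curvature `κ` on `[0,L]`, normal `N`,
binormal `B`, torsion `τ` and `w = κ/√(κ²+β²)`, and any smooth `δ` compactly
supported in `(0,L)`, the map `h ↦ E(x + hδB)` has derivative
`∫₀ᴸ δ(s)(2τ(s)w'(s) + τ'(s)w(s)) ds` at `h = 0`. -/
theorem stmt_1 (β L : ℝ) (hβ : 0 < β) (hL : 0 < L)
    (x : ℝ → EuclideanSpace ℝ (Fin 3)) (hx : ContDiff ℝ (⊤ : ℕ∞) x)
    (U : Set ℝ) (hU : IsOpen U) (hUL : Set.Icc 0 L ⊆ U)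
    (hunit : ∀ s ∈ U, ‖deriv x s‖ = 1)
    (κ : ℝ → ℝ) (hκdef : ∀ s, κ s = ‖deriv (deriv x) s‖)
    (hκpos : ∀ s ∈ Set.Icc (0 : ℝ) L, 0 < κ s)
    (N B : ℝ → EuclideanSpace ℝ (Fin 3)) (τ w : ℝ → ℝ)
    (hN : ∀ s, N s = (κ s)⁻¹ • deriv (deriv x) s)
    (hB : ∀ s, B s = cross3 (deriv x s) (N s))
    (hτ : ∀ s, τ s = (inner ℝ (deriv N s) (B s) : ℝ))
    (hw : ∀ s, w s = κ s / Real.sqrt (κ s ^ 2 + β ^ 2))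
    (δ : ℝ → ℝ) (hδ : ContDiff ℝ (⊤ : ℕ∞) δ)
    (hδc : HasCompactSupport δ) (hδsupp : tsupport δ ⊆ Set.Ioo 0 L) :
    HasDerivAt (fun h : ℝ => elasticaEnergy β L (fun s => x s + (h * δ s) • B s))
      (∫ s in (0:ℝ)..L, δ s * (2 * τ s * deriv w s + deriv τ s * w s)) 0 := by
  classical
  have hone : (1:WithTop ℕ∞) ≤ ∞ := by exact_mod_cast le_top
  have hinf1 : (∞:WithTop ℕ∞) + 1 ≤ ∞ := by exact_mod_cast le_top
  have hx' : ContDiff ℝ ∞ x := hx.of_le (by simp)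
  have hδ' : ContDiff ℝ ∞ δ := hδ.of_le (by simp)
  have hT : ContDiff ℝ ∞ (deriv x) := (contDiff_infty_iff_deriv.mp hx').2
  have ha : ContDiff ℝ ∞ (deriv (deriv x)) := (contDiff_infty_iff_deriv.mp hT).2
  have hδ1 : ContDiff ℝ ∞ (deriv δ) := (contDiff_infty_iff_deriv.mp hδ').2
  have hκeq : κ = fun s => ‖deriv (deriv x) s‖ := funext hκdef
  have hκcont : Continuous κ := by rw [hκeq]; exact ha.continuous.norm
  set V : Set ℝ := U ∩ κ ⁻¹' Set.Ioi 0 with hVdef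
  have hVopen : IsOpen V := hU.inter (isOpen_Ioi.preimage hκcont)
  have hVL : Set.Icc 0 L ⊆ V := fun s hs => ⟨hUL hs, hκpos s hs⟩
  have hVU : V ⊆ U := fun s hs => hs.1
  have hκVpos : ∀ s ∈ V, 0 < κ s := fun s hs => hs.2
  have haV : ∀ s ∈ V, deriv (deriv x) s ≠ 0 := by
    intro s hs h0
    have h2 := hκVpos s hs
    rw [hκdef s, h0, norm_zero] at h2
    exact lt_irrefl 0 h2
  have hmemnhds : ∀ s ∈ V, V ∈ nhds s := fun s hs => hVopen.mem_nhds hs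
  have hκAt : ∀ s ∈ V, ContDiffAt ℝ ∞ κ s := by
    intro s hs; rw [hκeq]; exact ha.contDiffAt.norm ℝ (haV s hs)
  have hNeq : N = fun s => (κ s)⁻¹ • deriv (deriv x) s := funext hN
  have hNAt : ∀ s ∈ V, ContDiffAt ℝ ∞ N s := by
    intro s hs; rw [hNeq]
    exact ((hκAt s hs).inv (hκVpos s hs).ne').smul ha.contDiffAt
  have hBeq : B = fun s => cross3 (deriv x s) (N s) := funext hB
  have hBAt : ∀ s ∈ V, ContDiffAt ℝ ∞ B s := by
    intro s hs; rw [hBeq]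
    exact hT.contDiffAt.cross3' (hNAt s hs)
  have hNOn : ContDiffOn ℝ ∞ N V := fun s hs => (hNAt s hs).contDiffWithinAt
  have hBOn : ContDiffOn ℝ ∞ B V := fun s hs => (hBAt s hs).contDiffWithinAt
  have hN'On : ContDiffOn ℝ ∞ (deriv N) V := hNOn.deriv_of_isOpen hVopen hinf1
  have hB'On : ContDiffOn ℝ ∞ (deriv B) V := hBOn.deriv_of_isOpen hVopen hinf1
  have hB''On : ContDiffOn ℝ ∞ (deriv (deriv B)) V := hB'On.deriv_of_isOpen hVopen hinf1
  have hN'At : ∀ s ∈ V, ContDiffAt ℝ ∞ (deriv N) s :=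
    fun s hs => (hN'On s hs).contDiffAt (hmemnhds s hs)
  have hB'At : ∀ s ∈ V, ContDiffAt ℝ ∞ (deriv B) s :=
    fun s hs => (hB'On s hs).contDiffAt (hmemnhds s hs)
  have hτeq : τ = fun s => (inner ℝ (deriv N s) (B s) : ℝ) := funext hτ
  have hτAt : ∀ s ∈ V, ContDiffAt ℝ ∞ τ s := by
    intro s hs; rw [hτeq]
    exact (hN'At s hs).inner ℝ (hBAt s hs)
  have hκβpos : ∀ s, (0:ℝ) < κ s ^ 2 + β ^ 2 := by
    intro s; positivity
  have hweq : w = fun s => κ s / Real.sqrt (κ s ^ 2 + β ^ 2) := funext hw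
  have hwAt : ∀ s ∈ V, ContDiffAt ℝ ∞ w s := by
    intro s hs; rw [hweq]
    have hs1 : ContDiffAt ℝ ∞ (fun s => Real.sqrt (κ s ^ 2 + β ^ 2)) s :=
      (((hκAt s hs).pow 2).add contDiffAt_const).sqrt (hκβpos s).ne'
    exact (hκAt s hs).div hs1 (Real.sqrt_pos.mpr (hκβpos s)).ne'
  -- basic HasDerivAt facts
  have hDT : ∀ s, HasDerivAt (deriv x) (deriv (deriv x) s) s :=
    fun s => (hT.differentiable (by simp) s).hasDerivAt
  have hDN : ∀ s ∈ V, HasDerivAt N (deriv N s) s :=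
    fun s hs => ((hNAt s hs).differentiableAt (by simp)).hasDerivAt
  have hDB : ∀ s ∈ V, HasDerivAt B (deriv B s) s :=
    fun s hs => ((hBAt s hs).differentiableAt (by simp)).hasDerivAt
  have hDN' : ∀ s ∈ V, HasDerivAt (deriv N) (deriv (deriv N) s) s :=
    fun s hs => ((hN'At s hs).differentiableAt (by simp)).hasDerivAt
  have hDB' : ∀ s ∈ V, HasDerivAt (deriv B) (deriv (deriv B) s) s :=
    fun s hs => ((hB'At s hs).differentiableAt (by simp)).hasDerivAt
  have hDτ : ∀ s ∈ V, HasDerivAt τ (deriv τ s) s :=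
    fun s hs => ((hτAt s hs).differentiableAt (by simp)).hasDerivAt
  have hDw : ∀ s ∈ V, HasDerivAt w (deriv w s) s :=
    fun s hs => ((hwAt s hs).differentiableAt (by simp)).hasDerivAt
  have hDδ : ∀ s, HasDerivAt δ (deriv δ s) s :=
    fun s => (hδ'.differentiable (by simp) s).hasDerivAt
  have hDδ' : ∀ s, HasDerivAt (deriv δ) (deriv (deriv δ) s) s :=
    fun s => (hδ1.differentiable (by simp) s).hasDerivAt
  -- geometric identities
  have haN : ∀ s ∈ V, deriv (deriv x) s = κ s • N s := by
    intro s hs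
    rw [hN s, smul_smul, mul_inv_cancel₀ (hκVpos s hs).ne', one_smul]
  have hTa : ∀ s ∈ U, (inner ℝ (deriv x s) (deriv (deriv x) s) : ℝ) = 0 := by
    intro s hs
    have hd := (hDT s).inner ℝ (hDT s)
    have hloc : (fun t => (inner ℝ (deriv x t) (deriv x t) : ℝ)) =ᶠ[nhds s]
        fun _ => (1:ℝ) := by
      filter_upwards [hU.mem_nhds hs] with t ht
      rw [real_inner_self_eq_norm_sq, hunit t ht]; norm_num
    have hd2 : HasDerivAt (fun _ : ℝ => (1:ℝ))
        ((inner ℝ (deriv x s) (deriv (deriv x) s) : ℝ)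
          + (inner ℝ (deriv (deriv x) s) (deriv x s) : ℝ)) s :=
      hd.congr_of_eventuallyEq hloc.symm
    have h0 := (hasDerivAt_const s (1:ℝ)).unique hd2
    have hcomm : (inner ℝ (deriv (deriv x) s) (deriv x s) : ℝ)
        = (inner ℝ (deriv x s) (deriv (deriv x) s) : ℝ) := real_inner_comm _ _
    rw [hcomm] at h0
    linarith
  have hTB : ∀ s, (inner ℝ (deriv x s) (B s) : ℝ) = 0 := by
    intro s; rw [hB s]; exact inner_cross3_left _ _
  have hNB : ∀ s, (inner ℝ (N s) (B s) : ℝ) = 0 := by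
    intro s; rw [hB s]; exact inner_cross3_right _ _
  have haB : ∀ s ∈ V, (inner ℝ (deriv (deriv x) s) (B s) : ℝ) = 0 := by
    intro s hs
    rw [haN s hs, real_inner_smul_left, hNB s, mul_zero]
  have hTB' : ∀ s ∈ V, (inner ℝ (deriv x s) (deriv B s) : ℝ) = 0 := by
    intro s hs
    have hd := (hDT s).inner ℝ (hDB s hs)
    rw [show (fun t => (inner ℝ (deriv x t) (B t) : ℝ)) = fun _ => (0:ℝ) from
      funext hTB] at hd
    have h0 := (hasDerivAt_const s (0:ℝ)).unique hd
    have := haB s hs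
    linarith
  have hNB' : ∀ s ∈ V, (inner ℝ (N s) (deriv B s) : ℝ) = -τ s := by
    intro s hs
    have hd := (hDN s hs).inner ℝ (hDB s hs)
    rw [show (fun t => (inner ℝ (N t) (B t) : ℝ)) = fun _ => (0:ℝ) from
      funext hNB] at hd
    have h0 := (hasDerivAt_const s (0:ℝ)).unique hd
    have := hτ s
    linarith
  have hB'formula : ∀ s ∈ V, deriv B s
      = cross3 (deriv (deriv x) s) (N s) + cross3 (deriv x s) (deriv N s) := by
    intro s hs
    have hd := (hDT s).cross3 (hDN s hs)
    rw [← hBeq] at hd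
    exact ((hDB s hs).unique hd)
  have hN'B' : ∀ s ∈ V, (inner ℝ (deriv N s) (deriv B s) : ℝ) = 0 := by
    intro s hs
    rw [hB'formula s hs, inner_add_right, haN s hs, cross3_smul_left, cross3_self,
      smul_zero, inner_zero_right, inner_cross3_right]
    ring
  have hNB'' : ∀ s ∈ V, (inner ℝ (N s) (deriv (deriv B) s) : ℝ) = -(deriv τ s) := by
    intro s hs
    have hd := (hDN s hs).inner ℝ (hDB' s hs)
    have hloc : (fun t => (inner ℝ (N t) (deriv B t) : ℝ)) =ᶠ[nhds s]
        fun t => -τ t := by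
      filter_upwards [hmemnhds s hs] with t ht
      exact hNB' t ht
    have hd2 : HasDerivAt (fun t => -τ t)
        ((inner ℝ (N s) (deriv (deriv B) s) : ℝ)
          + (inner ℝ (deriv N s) (deriv B s) : ℝ)) s :=
      hd.congr_of_eventuallyEq hloc.symm
    have h0 := ((hDτ s hs).neg).unique hd2
    have := hN'B' s hs
    linarith
  have haB' : ∀ s ∈ V, (inner ℝ (deriv (deriv x) s) (deriv B s) : ℝ) = -(κ s * τ s) := by
    intro s hs
    rw [haN s hs, real_inner_smul_left, hNB' s hs]
    ring
  have haB'' : ∀ s ∈ V, (inner ℝ (deriv (deriv x) s) (deriv (deriv B) s) : ℝ)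
      = -(κ s * deriv τ s) := by
    intro s hs
    rw [haN s hs, real_inner_smul_left, hNB'' s hs]
    ring
  -- the perturbation vector field
  set ξ : ℝ → EuclideanSpace ℝ (Fin 3) := fun s => δ s • B s with hξdef
  have hξsm : ContDiff ℝ ∞ ξ := by
    rw [contDiff_iff_contDiffAt]
    intro s
    by_cases hs : s ∈ tsupport δ
    · have hsV : s ∈ V := hVL (Set.Ioo_subset_Icc_self (hδsupp hs))
      exact hδ'.contDiffAt.smul (hBAt s hsV)
    · refine ContDiffAt.congr_of_eventuallyEq (contDiffAt_const (c := 0)) ?_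
      filter_upwards [(isClosed_tsupport δ).isOpen_compl.mem_nhds hs] with t ht
      simp [hξdef, image_eq_zero_of_notMem_tsupport ht]
  have hξ1 : ContDiff ℝ ∞ (deriv ξ) := (contDiff_infty_iff_deriv.mp hξsm).2
  have hξ2 : ContDiff ℝ ∞ (deriv (deriv ξ)) := (contDiff_infty_iff_deriv.mp hξ1).2
  have hξ'formula : ∀ s ∈ V, deriv ξ s = δ s • deriv B s + deriv δ s • B s := by
    intro s hs
    exact (((hDδ s).smul (hDB s hs)).deriv)
  have hTξ' : ∀ s ∈ V, (inner ℝ (deriv x s) (deriv ξ s) : ℝ) = 0 := by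
    intro s hs
    rw [hξ'formula s hs, inner_add_right, real_inner_smul_right, real_inner_smul_right,
      hTB s, hTB' s hs]
    ring
  have hξ''formula : ∀ s ∈ V, deriv (deriv ξ) s
      = (δ s • deriv (deriv B) s + deriv δ s • deriv B s)
        + (deriv δ s • deriv B s + deriv (deriv δ) s • B s) := by
    intro s hs
    have hd : HasDerivAt (fun t => δ t • deriv B t + deriv δ t • B t)
        ((δ s • deriv (deriv B) s + deriv δ s • deriv B s)
          + (deriv δ s • deriv B s + deriv (deriv δ) s • B s)) s :=
      ((hDδ s).smul (hDB' s hs)).add ((hDδ' s).smul (hDB s hs))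
    have hloc : deriv ξ =ᶠ[nhds s] fun t => δ t • deriv B t + deriv δ t • B t := by
      filter_upwards [hmemnhds s hs] with t ht
      exact hξ'formula t ht
    exact (hd.congr_of_eventuallyEq hloc).deriv
  have haξ'' : ∀ s ∈ V, (inner ℝ (deriv (deriv x) s) (deriv (deriv ξ) s) : ℝ)
      = -(κ s * (2 * deriv δ s * τ s + δ s * deriv τ s)) := by
    intro s hs
    rw [hξ''formula s hs]
    simp only [inner_add_right, real_inner_smul_right]
    rw [haB s hs, haB' s hs, haB'' s hs]
    ring
  -- pointwise derivative in h at h = 0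
  have key0 : ∀ s ∈ Set.Icc (0:ℝ) L,
      HasDerivAt (fun h : ℝ =>
          psiA β (deriv x) (deriv ξ) (deriv (deriv x)) (deriv (deriv ξ)) (h, s))
        (-(w s * (2 * τ s * deriv δ s + deriv τ s * δ s))) 0 := by
    intro s hs
    have hsV : s ∈ V := hVL hs
    have hsU : s ∈ U := hUL hs
    have h1 := psi_hasDerivAt_zero β hβ (deriv x s) (deriv ξ s) (deriv (deriv x) s)
      (deriv (deriv ξ) s) (hunit s hsU) (hTa s hsU) (hTξ' s hsV)
    have hval : (inner ℝ (deriv (deriv x) s) (deriv (deriv ξ) s) : ℝ)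
        / Real.sqrt (‖deriv (deriv x) s‖ ^ 2 + β ^ 2)
        = -(w s * (2 * τ s * deriv δ s + deriv τ s * δ s)) := by
      rw [haξ'' s hsV, show ‖deriv (deriv x) s‖ ^ 2 = κ s ^ 2 by rw [hκdef s], hw s]
      ring
    rw [hval] at h1
    simp only [psiA, vA]
    exact h1
  -- extra regularity facts used at the end
  have hτOn : ContDiffOn ℝ ∞ τ V := fun s hs => (hτAt s hs).contDiffWithinAt
  have hwOn : ContDiffOn ℝ ∞ w V := fun s hs => (hwAt s hs).contDiffWithinAt
  have hτ'cOn : ContinuousOn (deriv τ) V :=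
    hτOn.continuousOn_deriv_of_isOpen hVopen hone
  have hw'cOn : ContinuousOn (deriv w) V :=
    hwOn.continuousOn_deriv_of_isOpen hVopen hone
  have hτcOn : ContinuousOn τ (Set.Icc (0:ℝ) L) := fun s hs =>
    ((hτAt s (hVL hs)).continuousAt).continuousWithinAt
  have hwcOn : ContinuousOn w (Set.Icc (0:ℝ) L) := fun s hs =>
    ((hwAt s (hVL hs)).continuousAt).continuousWithinAt
  -- the two-variable function Ψ and its regularity
  set F2 : ℝ × ℝ → ℝ := psiA β (deriv x) (deriv ξ) (deriv (deriv x)) (deriv (deriv ξ))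
    with hF2def
  set O : Set (ℝ × ℝ) := (vA (deriv x) (deriv ξ)) ⁻¹' {(0:EuclideanSpace ℝ (Fin 3))}ᶜ
    with hOdef
  have hOopen : IsOpen O :=
    isOpen_compl_singleton.preimage (vA_contDiff hT hξ1).continuous
  have hOne : ∀ p ∈ O, vA (deriv x) (deriv ξ) p ≠ 0 := fun p hp => hp
  have hOmem : ∀ p : ℝ × ℝ, vA (deriv x) (deriv ξ) p ≠ 0 → p ∈ O := fun p hp => hp
  have hF2cd : ContDiffOn ℝ ∞ F2 O := fun p hp =>
    (psiA_contDiffAt β hβ hT hξ1 ha hξ2 (hOne p hp)).contDiffWithinAt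
  set Fd : ℝ × ℝ → ℝ := fun p => fderiv ℝ F2 p (1, 0) with hFddef
  have hFdcont : ContinuousOn Fd O :=
    (hF2cd.continuousOn_fderiv_of_isOpen hOopen hone).clm_apply continuousOn_const
  have hFdderiv : ∀ p ∈ O, HasDerivAt (fun h => F2 (h, p.2)) (Fd p) p.1 := by
    rintro ⟨p1, p2⟩ hp
    have h1 : HasFDerivAt F2 (fderiv ℝ F2 (p1, p2)) (p1, p2) :=
      (((hF2cd _ hp).contDiffAt (hOopen.mem_nhds hp)).differentiableAt (by simp)).hasFDerivAt
    have h2 : HasDerivAt (fun h : ℝ => ((h, p2) : ℝ × ℝ)) ((1:ℝ), (0:ℝ)) p1 :=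
      (hasDerivAt_id p1).prodMk (hasDerivAt_const p1 p2)
    exact h1.comp_hasDerivAt p1 h2
  -- uniform bounds
  obtain ⟨M0, hM0⟩ := (isCompact_Icc (a := (0:ℝ)) (b := L)).exists_bound_of_continuousOn
    (hξ1.continuous.continuousOn)
  set M : ℝ := max M0 0 with hMdef
  have hM : ∀ s ∈ Set.Icc (0:ℝ) L, ‖deriv ξ s‖ ≤ M := fun s hs =>
    (hM0 s hs).trans (le_max_left _ _)
  have hMnn : (0:ℝ) ≤ M := le_max_right _ _
  set ε : ℝ := (2 * (M + 1))⁻¹ with hεdef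
  have hεpos : 0 < ε := by rw [hεdef]; positivity
  have hεM : ε * M ≤ 1/2 := by
    rw [hεdef, inv_mul_eq_div, div_le_div_iff₀ (by positivity) (by norm_num)]
    nlinarith
  have hKmem : ∀ (h s : ℝ), |h| ≤ ε → s ∈ Set.Icc (0:ℝ) L → ((h, s) : ℝ × ℝ) ∈ O := by
    intro h s hh hs
    refine hOmem _ ?_
    intro h0
    have h4 : vA (deriv x) (deriv ξ) (h, s) = deriv x s + h • deriv ξ s := rfl
    rw [h4] at h0
    have hlow : ‖deriv x s‖ - ‖h • deriv ξ s‖ ≤ ‖deriv x s + h • deriv ξ s‖ := by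
      have h1 := norm_sub_norm_le (deriv x s) (-(h • deriv ξ s))
      rw [norm_neg, sub_neg_eq_add] at h1
      exact h1
    have h2 : ‖h • deriv ξ s‖ ≤ ε * M := by
      rw [norm_smul, Real.norm_eq_abs]
      exact mul_le_mul hh (hM s hs) (norm_nonneg _) hεpos.le
    have h3 : ‖deriv x s‖ = 1 := hunit s (hUL hs)
    rw [h0, norm_zero, h3] at hlow
    linarith
  set K : Set (ℝ × ℝ) := Set.Icc (-ε) ε ×ˢ Set.Icc (0:ℝ) L with hKdef
  have hKcomp : IsCompact K := isCompact_Icc.prod isCompact_Icc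
  have hKO : K ⊆ O := by
    rintro ⟨h, s⟩ ⟨hh, hs⟩
    exact hKmem h s (abs_le.mpr hh) hs
  obtain ⟨C, hC⟩ := hKcomp.exists_bound_of_continuousOn (hFdcont.mono hKO)
  set μ : Measure ℝ := volume.restrict (Set.Ioc 0 L) with hμdef
  -- hypotheses of the dominated-convergence derivative theorem
  have hmeas : ∀ h : ℝ, AEStronglyMeasurable (fun s => F2 (h, s)) μ := by
    intro h
    have hvc : Continuous (fun s : ℝ => deriv x s + h • deriv ξ s) :=
      hT.continuous.add (continuous_const.fun_smul hξ1.continuous)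
    have hac : Continuous (fun s : ℝ => deriv (deriv x) s + h • deriv (deriv ξ) s) :=
      ha.continuous.add (continuous_const.fun_smul hξ2.continuous)
    have hcc : Continuous (fun s : ℝ => cross3 (deriv x s + h • deriv ξ s)
        (deriv (deriv x) s + h • deriv (deriv ξ) s)) := hvc.cross3' hac
    have hm : Measurable (fun s : ℝ => Real.sqrt
        (‖cross3 (deriv x s + h • deriv ξ s) (deriv (deriv x) s + h • deriv (deriv ξ) s)‖ ^ 2
          / ‖deriv x s + h • deriv ξ s‖ ^ 4
          + β ^ 2 * ‖deriv x s + h • deriv ξ s‖ ^ 2)) :=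
      Real.continuous_sqrt.measurable.comp
        ((((hcc.norm.pow 2).measurable).div ((hvc.norm.pow 4).measurable)).add
          ((continuous_const.mul (hvc.norm.pow 2)).measurable))
    have hfe : (fun s : ℝ => F2 (h, s)) = fun s : ℝ => Real.sqrt
        (‖cross3 (deriv x s + h • deriv ξ s) (deriv (deriv x) s + h • deriv (deriv ξ) s)‖ ^ 2
          / ‖deriv x s + h • deriv ξ s‖ ^ 4
          + β ^ 2 * ‖deriv x s + h • deriv ξ s‖ ^ 2) := by
      funext s
      simp only [hF2def, psiA, vA]
    rw [hfe]
    exact hm.aestronglyMeasurable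
  have habs0 : |(0:ℝ)| ≤ ε := by rw [abs_zero]; exact hεpos.le
  have hintF0 : Integrable (fun s => F2 (0, s)) μ := by
    have hcont : ContinuousOn (fun s : ℝ => F2 (0, s)) (Set.Icc 0 L) := by
      refine (hF2cd.continuousOn).comp
        (continuous_const.prodMk continuous_id).continuousOn ?_
      intro s hs
      exact hKmem 0 s habs0 hs
    rw [hμdef]
    exact hcont.integrableOn_Icc.mono_set Set.Ioc_subset_Icc_self
  have hmeasFd : AEStronglyMeasurable (fun s => Fd (0, s)) μ := by
    have hcont : ContinuousOn (fun s : ℝ => Fd (0, s)) (Set.Icc 0 L) := by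
      refine hFdcont.comp (continuous_const.prodMk continuous_id).continuousOn ?_
      intro s hs
      exact hKmem 0 s habs0 hs
    rw [hμdef]
    exact (hcont.mono Set.Ioc_subset_Icc_self).aestronglyMeasurable measurableSet_Ioc
  have hbound : ∀ᵐ s ∂μ, ∀ h ∈ Metric.ball (0:ℝ) ε, ‖Fd (h, s)‖ ≤ C := by
    rw [hμdef]
    refine (MeasureTheory.ae_restrict_iff' measurableSet_Ioc).mpr (MeasureTheory.ae_of_all _ ?_)
    intro s hs h hh
    have hsI : s ∈ Set.Icc (0:ℝ) L := Set.Ioc_subset_Icc_self hs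
    have hhe : |h| ≤ ε := by
      rw [Metric.mem_ball, dist_zero_right, Real.norm_eq_abs] at hh
      exact hh.le
    exact hC (h, s) ⟨Set.mem_Icc.mpr (abs_le.mp hhe), hsI⟩
  have hbint : Integrable (fun _ : ℝ => C) μ := by
    rw [hμdef]
    exact MeasureTheory.integrableOn_const measure_Ioc_lt_top.ne
  have hdiffae : ∀ᵐ s ∂μ, ∀ h ∈ Metric.ball (0:ℝ) ε,
      HasDerivAt (fun h' => F2 (h', s)) (Fd (h, s)) h := by
    rw [hμdef]
    refine (MeasureTheory.ae_restrict_iff' measurableSet_Ioc).mpr (MeasureTheory.ae_of_all _ ?_)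
    intro s hs h hh
    have hsI : s ∈ Set.Icc (0:ℝ) L := Set.Ioc_subset_Icc_self hs
    have hhe : |h| ≤ ε := by
      rw [Metric.mem_ball, dist_zero_right, Real.norm_eq_abs] at hh
      exact hh.le
    exact hFdderiv (h, s) (hKmem h s hhe hsI)
  have hmain := (hasDerivAt_integral_of_dominated_loc_of_deriv_le (Metric.ball_mem_nhds 0 hεpos)
    (Filter.Eventually.of_forall hmeas) hintF0 hmeasFd hbound hbint hdiffae).2
  -- identify the function being differentiated
  have hfun : (fun h : ℝ => elasticaEnergy β L (fun s => x s + (h * δ s) • B s))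
      = fun h : ℝ => ∫ s, F2 (h, s) ∂μ := by
    funext h
    have hyx : (fun s => x s + (h * δ s) • B s) = fun s => x s + h • ξ s := by
      funext s
      rw [hξdef, mul_smul]
    have hyd : deriv (fun s => x s + h • ξ s) = fun t => deriv x t + h • deriv ξ t := by
      funext t
      exact (((hx'.differentiable (by simp) t).hasDerivAt).add
        (((hξsm.differentiable (by simp) t).hasDerivAt).const_smul h)).deriv
    have hydd : deriv (deriv (fun s => x s + h • ξ s))
        = fun t => deriv (deriv x) t + h • deriv (deriv ξ) t := by
      rw [hyd]
      funext t
      exact (((hT.differentiable (by simp) t).hasDerivAt).add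
        (((hξ1.differentiable (by simp) t).hasDerivAt).const_smul h)).deriv
    rw [hyx]
    simp only [elasticaEnergy]
    rw [intervalIntegral.integral_of_le hL.le, hμdef]
    refine MeasureTheory.integral_congr_ae (MeasureTheory.ae_of_all _ fun t => ?_)
    rw [hydd, hyd]
    simp only [hF2def, psiA, vA]
  rw [hfun]
  refine hmain.congr_deriv ?_; symm
  -- identify the derivative value
  have hkey : ∀ s ∈ Set.Icc (0:ℝ) L,
      Fd (0, s) = -(w s * (2 * τ s * deriv δ s + deriv τ s * δ s)) := by
    intro s hs
    have h1 := hFdderiv (0, s) (hKmem 0 s habs0 hs)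
    have h2 := key0 s hs
    rw [hF2def] at h1
    exact h1.unique h2
  have hμint : (∫ s, Fd (0, s) ∂μ) = ∫ s in (0:ℝ)..L, Fd (0, s) := by
    rw [intervalIntegral.integral_of_le hL.le, hμdef]
  rw [hμint]
  have heqOn : Set.EqOn (fun s => Fd (0, s))
      (fun s => -(w s * (2 * τ s * deriv δ s + deriv τ s * δ s))) (Set.uIcc (0:ℝ) L) := by
    rw [Set.uIcc_of_le hL.le]
    intro s hs
    exact hkey s hs
  rw [intervalIntegral.integral_congr heqOn]
  -- final integration by parts
  have hδccont := hδ'.continuous.continuousOn (s := Set.uIcc (0:ℝ) L)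
  have hδ1cont := hδ1.continuous.continuousOn (s := Set.uIcc (0:ℝ) L)
  have huIcc : Set.uIcc (0:ℝ) L = Set.Icc (0:ℝ) L := Set.uIcc_of_le hL.le
  have hInt1 : IntervalIntegrable
      (fun s => δ s * (2 * τ s * deriv w s + deriv τ s * w s)) volume 0 L := by
    apply ContinuousOn.intervalIntegrable
    rw [huIcc]
    exact (hδ'.continuous.continuousOn).mul
      (((continuousOn_const.mul hτcOn).mul (hw'cOn.mono hVL)).add
        ((hτ'cOn.mono hVL).mul hwcOn))
  have hInt2 : IntervalIntegrable
      (fun s => -(w s * (2 * τ s * deriv δ s + deriv τ s * δ s))) volume 0 L := by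
    apply ContinuousOn.intervalIntegrable
    rw [huIcc]
    exact (hwcOn.mul
      (((continuousOn_const.mul hτcOn).mul (hδ1.continuous.continuousOn)).add
        ((hτ'cOn.mono hVL).mul (hδ'.continuous.continuousOn)))).neg
  have hInte : IntervalIntegrable
      (fun s => deriv δ s * τ s * w s + δ s * deriv τ s * w s + δ s * τ s * deriv w s)
      volume 0 L := by
    apply ContinuousOn.intervalIntegrable
    rw [huIcc]
    exact (((hδ1.continuous.continuousOn.mul hτcOn).mul hwcOn).add
      (((hδ'.continuous.continuousOn.mul (hτ'cOn.mono hVL)).mul hwcOn))).add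
      ((hδ'.continuous.continuousOn.mul hτcOn).mul (hw'cOn.mono hVL))
  have hgd : ∀ t ∈ Set.uIcc (0:ℝ) L, HasDerivAt (fun u => δ u * τ u * w u)
      (deriv δ t * τ t * w t + δ t * deriv τ t * w t + δ t * τ t * deriv w t) t := by
    intro t ht
    have htV : t ∈ V := hVL (by rwa [huIcc] at ht)
    have h1 := ((hDδ t).fun_mul (hDτ t htV)).fun_mul (hDw t htV)
    exact h1.congr_deriv (by ring)
  have hFTC := intervalIntegral.integral_eq_sub_of_hasDerivAt hgd hInte
  have hδ0 : δ 0 = 0 := by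
    apply image_eq_zero_of_notMem_tsupport
    intro hmem
    exact lt_irrefl 0 (hδsupp hmem).1
  have hδL : δ L = 0 := by
    apply image_eq_zero_of_notMem_tsupport
    intro hmem
    exact lt_irrefl L (hδsupp hmem).2
  have hzero : (∫ t in (0:ℝ)..L,
      (deriv δ t * τ t * w t + δ t * deriv τ t * w t + δ t * τ t * deriv w t)) = 0 := by
    rw [hFTC, hδ0, hδL]
    ring
  have hsub := intervalIntegral.integral_sub hInt1 hInt2
  have hpt : Set.EqOn
      (fun s => δ s * (2 * τ s * deriv w s + deriv τ s * w s)
        - -(w s * (2 * τ s * deriv δ s + deriv τ s * δ s)))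
      (fun s => 2 * (deriv δ s * τ s * w s + δ s * deriv τ s * w s + δ s * τ s * deriv w s))
      (Set.uIcc (0:ℝ) L) := by
    intro s _
    simp only
    ring
  have hcomb : (∫ s in (0:ℝ)..L,
        (δ s * (2 * τ s * deriv w s + deriv τ s * w s)
          - -(w s * (2 * τ s * deriv δ s + deriv τ s * δ s)))) = 0 := by
    rw [intervalIntegral.integral_congr hpt, intervalIntegral.integral_const_mul, hzero]
    ring
  rw [hcomb] at hsub
  linarith [hsub.symm]

end
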